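/- arXiv:math/0004086 — 3 statements merged into one kernel-verified Lean document; each statement's English description precedes it below -/
import Mathlib

section
/- Let g ≥ 0 be an integer. Let N be the free ℤ-module with basis {ε, f₁, f₂} equipped with the symmetric bilinear form determined by ⟨ε, ε⟩ = 2g − 2, ⟨f₁, f₁⟩ = ⟨f₂, f₂⟩ = 0, ⟨f₁, f₂⟩ = 1, and ⟨ε, f₁⟩ = ⟨ε, f₂⟩ = 0. Then the characteristic polynomial of the composite ψ_{f₁,ε} ∘ s_{f₁−f₂} equals t³ + (g−2)t² + (g−2)t + 1, i.e., det(t·id − ψ_{f₁,ε} ∘ s_{f₁−f₂}) = 1 + (g−2)t + (g−2)t² + t³ in ℤ[t]. -/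
open Polynomial

/-- The Eichler–Siegel transformation `ψ_{f,w}` associated to a bilinear form `B` on a
`ℤ`-module `N` and vectors `f, w ∈ N`, where `h` denotes the half `½⟨w,w⟩` of the (even)
squared length of `w`:  `ψ_{f,w}(x) = x + ⟨x,f⟩w − ⟨x,w⟩f − ½⟨w,w⟩⟨x,f⟩f`. -/
noncomputable def eichlerSiegel {N : Type*} [AddCommGroup N] [Module ℤ N]
    (B : LinearMap.BilinForm ℤ N) (f w : N) (h : ℤ) : Module.End ℤ N :=
  LinearMap.id + (LinearMap.toSpanSingleton ℤ N w) ∘ₗ (B.flip f)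
    - (LinearMap.toSpanSingleton ℤ N f) ∘ₗ (B.flip w)
    - h • ((LinearMap.toSpanSingleton ℤ N f) ∘ₗ (B.flip f))

/-- The reflection `s_δ(x) = x + ⟨x,δ⟩δ` in a vector `δ` with `⟨δ,δ⟩ = −2`. -/
noncomputable def reflNeg2 {N : Type*} [AddCommGroup N] [Module ℤ N]
    (B : LinearMap.BilinForm ℤ N) (δ : N) : Module.End ℤ N :=
  LinearMap.id + (LinearMap.toSpanSingleton ℤ N δ) ∘ₗ (B.flip δ)

/-!
The reflection `s = s_{f₁−f₂}` fixes `ε ⊥ f₁, f₂` and swaps the isotropic pair `f₁, f₂`,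
while `ψ = ψ_{f₁,ε}` fixes `f₁`, sends `ε ↦ ε − (2g−2)f₁` and `f₂ ↦ f₂ + ε − (g−1)f₁`.
So `ψ ∘ s` maps `ε ↦ ε − (2g−2)f₁`, `f₁ ↦ ε − (g−1)f₁ + f₂`, `f₂ ↦ f₁`, and the characteristic
polynomial of this `3 × 3` matrix is expanded directly.
-/

section

variable {N : Type*} [AddCommGroup N] {B : LinearMap.BilinForm ℤ N}

@[simp]
lemma eichlerSiegel_apply (f w : N) (h : ℤ) (x : N) :
    eichlerSiegel B f w h x = x + B x f • w - B x w • f - (h * B x f) • f := by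
  simp [eichlerSiegel, mul_smul, smul_comm h]

@[simp]
lemma reflNeg2_apply (δ x : N) : reflNeg2 B δ x = x + B x δ • δ := by
  simp [reflNeg2]

lemma eichlerSiegel_apply_of_orthogonal {f w x : N} (h : ℤ) (hf : B x f = 0) (hw : B x w = 0) :
    eichlerSiegel B f w h x = x := by
  simp [hf, hw]

lemma eichlerSiegel_apply_right {f w : N} (h : ℤ) (hwf : B w f = 0) :
    eichlerSiegel B f w h w = w - B w w • f := by
  simp [hwf]

lemma eichlerSiegel_apply_of_apply_left_eq_one {f w x : N} (h : ℤ) (hf : B x f = 1)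
    (hw : B x w = 0) : eichlerSiegel B f w h x = x + w - h • f := by
  simp [hf, hw]

variable {f₁ f₂ x : N}

lemma reflNeg2_sub_apply_left (h₁₁ : B f₁ f₁ = 0) (h₁₂ : B f₁ f₂ = 1) :
    reflNeg2 B (f₁ - f₂) f₁ = f₂ := by
  simp [h₁₁, h₁₂]

lemma reflNeg2_sub_apply_right (h₂₁ : B f₂ f₁ = 1) (h₂₂ : B f₂ f₂ = 0) :
    reflNeg2 B (f₁ - f₂) f₂ = f₁ := by
  simp [h₂₁, h₂₂]

lemma reflNeg2_sub_apply_of_orthogonal (h₁ : B x f₁ = 0) (h₂ : B x f₂ = 0) :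
    reflNeg2 B (f₁ - f₂) x = x := by
  simp [h₁, h₂]

end

lemma LinearMap.charpoly_eq_of_apply_basis_fin_three {R M : Type*} [CommRing R] [AddCommGroup M]
    [Module R M] [Module.Free R M] [Module.Finite R M] (b : Module.Basis (Fin 3) R M) (c : R)
    (T : Module.End R M) (h₀ : T (b 0) = b 0 - (2 * c) • b 1)
    (h₁ : T (b 1) = b 0 - c • b 1 + b 2) (h₂ : T (b 2) = b 1) :
    T.charpoly = X ^ 3 + C (c - 1) * X ^ 2 + C (c - 1) * X + 1 := by
  have hT : LinearMap.toMatrix b b T = !![1, 1, 0; -(2 * c), -c, 1; 0, 1, 0] := by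
    ext i j
    fin_cases i <;> fin_cases j <;>
      simp [LinearMap.toMatrix_apply, h₀, h₁, h₂]
  rw [← LinearMap.charpoly_toMatrix T b, hT, Matrix.charpoly, Matrix.det_fin_three]
  simp only [Matrix.charmatrix_apply, Matrix.diagonal_apply, Matrix.of_apply, Matrix.cons_val',
    Matrix.cons_val_zero, Matrix.cons_val_one, Matrix.cons_val, Matrix.cons_val_fin_one,
    Fin.reduceEq, if_true, if_false, map_one, map_zero, map_neg, map_mul, map_sub, C_ofNat]
  ring

/-- on the free `ℤ`-module with basis `{ε, f₁, f₂}` (here `ε = b 0`,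
`f₁ = b 1`, `f₂ = b 2`) and the symmetric bilinear form with `⟨ε,ε⟩ = 2g−2`,
`⟨f₁,f₁⟩ = ⟨f₂,f₂⟩ = 0`, `⟨f₁,f₂⟩ = 1`, `⟨ε,f₁⟩ = ⟨ε,f₂⟩ = 0`, the characteristic
polynomial of `ψ_{f₁,ε} ∘ s_{f₁−f₂}` is `1 + (g−2)t + (g−2)t² + t³`.
(The half-square parameter of `ψ_{f₁,ε}` is `½⟨ε,ε⟩ = g−1`.) -/
theorem charpoly_eichlerSiegel_mul_refl
    (g : ℕ) {N : Type*} [AddCommGroup N] [Module ℤ N]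
    [Module.Free ℤ N] [Module.Finite ℤ N]
    (b : Module.Basis (Fin 3) ℤ N) (B : LinearMap.BilinForm ℤ N)
    (hεε : B (b 0) (b 0) = 2 * (g : ℤ) - 2)
    (hf₁f₁ : B (b 1) (b 1) = 0) (hf₂f₂ : B (b 2) (b 2) = 0)
    (hf₁f₂ : B (b 1) (b 2) = 1) (hf₂f₁ : B (b 2) (b 1) = 1)
    (hεf₁ : B (b 0) (b 1) = 0) (hf₁ε : B (b 1) (b 0) = 0)
    (hεf₂ : B (b 0) (b 2) = 0) (hf₂ε : B (b 2) (b 0) = 0) :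
    LinearMap.charpoly
        (eichlerSiegel B (b 1) (b 0) ((g : ℤ) - 1) * reflNeg2 B (b 1 - b 2)) =
      1 + C ((g : ℤ) - 2) * X + C ((g : ℤ) - 2) * X ^ 2 + X ^ 3 := by
  obtain rfl : ‹Module ℤ N› = AddCommGroup.toIntModule N := Subsingleton.elim _ _
  have hεε' : B (b 0) (b 0) = 2 * ((g : ℤ) - 1) := by rw [hεε]; ring
  rw [LinearMap.charpoly_eq_of_apply_basis_fin_three b ((g : ℤ) - 1) _ ?_ ?_ ?_]
  · rw [sub_sub, one_add_one_eq_two]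
    ring
  · rw [Module.End.mul_apply, reflNeg2_sub_apply_of_orthogonal hεf₁ hεf₂,
      eichlerSiegel_apply_right _ hεf₁, hεε']
  · rw [Module.End.mul_apply, reflNeg2_sub_apply_left hf₁f₁ hf₁f₂,
      eichlerSiegel_apply_of_apply_left_eq_one _ hf₂f₁ hf₂ε]
    abel
  · rw [Module.End.mul_apply, reflNeg2_sub_apply_right hf₂f₁ hf₂f₂,
      eichlerSiegel_apply_of_orthogonal _ hf₁f₁ hf₁ε]
end

section
/- Let N be a free ℤ-module with a symmetric bilinear form ⟨·,·⟩, and let f, ε ∈ N with ⟨f, f⟩ = 0, ⟨f, ε⟩ = 0, and ⟨ε, ε⟩ = −2. Then ⟨ε − f, ε − f⟩ = −2, and the Eichler–Siegel transformation ψ_{f,ε} factors as a product of two reflections in (−2)-vectors: ψ_{f,ε} = s_ε ∘ s_{ε−f}, i.e., for every x ∈ N one has ψ_{f,ε}(x) = s_ε(s_{ε−f}(x)). -/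
/-- if `⟨f,f⟩ = 0`, `⟨f,ε⟩ = 0` and `⟨ε,ε⟩ = −2`, then `⟨ε−f,ε−f⟩ = −2` and
the Eichler–Siegel transformation `ψ_{f,ε}` (whose half-square parameter is `−1`) factors
as the product of the two reflections `s_ε ∘ s_{ε−f}` in `(−2)`-vectors. -/
theorem eichlerSiegel_eq_refl_comp_refl
    {N : Type*} [AddCommGroup N] [Module ℤ N] [Module.Free ℤ N]
    (B : LinearMap.BilinForm ℤ N) (hsymm : ∀ x y, B x y = B y x)
    (f ε : N) (hf : B f f = 0) (hfε : B f ε = 0) (hε : B ε ε = -2) :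
    B (ε - f) (ε - f) = -2 ∧
      ∀ x : N, eichlerSiegel B f ε (-1) x = reflNeg2 B ε (reflNeg2 B (ε - f) x) := by
  rename_i inst _
  obtain rfl : inst = AddCommGroup.toIntModule N :=
    @Subsingleton.elim _ AddCommGroup.uniqueIntModule.instSubsingleton _ _
  constructor
  · simp [map_sub, hsymm ε f, hf, hfε, hε]
  · intro x
    have hεf : B ε f = 0 := by rw [hsymm]; exact hfε
    simp only [eichlerSiegel, reflNeg2, LinearMap.sub_apply, LinearMap.add_apply,
      LinearMap.smul_apply, LinearMap.comp_apply, LinearMap.id_apply,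
      LinearMap.toSpanSingleton_apply, LinearMap.BilinForm.flip_apply,
      map_sub, map_add, map_smul, smul_sub, hf, hfε, hεf, hε, smul_eq_mul]
    module
end

section
/- Let R be a commutative ring, n ≥ 1, and let A = (a_{ij}) be an n × n matrix over R. For each i, let s_i be the R-linear endomorphism of R^n defined on the standard basis vectors by s_i(e_j) = e_j − a_{ij} e_i, and let c = s_1 ∘ s_2 ∘ ⋯ ∘ s_n. Then the characteristic polynomial of c is given by det(t·id − c) = det(B(t)), where B(t) is the n × n matrix over R[t] with entries B(t)_{ij} = t·a_{ij} for i < j, B(t)_{ii} = t − 1 + a_{ii}, and B(t)_{ij} = a_{ij} for i > j. -/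
/-!
In the standard basis `s i` has matrix `1 - eᵢ aᵢ`, with `aᵢ` the `i`-th row of `A`, so right
multiplication by it subtracts `vᵢ aᵢ` from a row vector `v`. Let `W = 1 + U`, with `U` the strictly
upper triangular part of `A`. Row `i` of `W` vanishes before `i`, and once `aᵢ` has been subtracted
from it it vanishes after `i`; hence `s₁, …, sₙ` act on it by subtracting `aᵢ` once, and
`W * M = W - A` for the matrix `M` of `c`. As `det W = 1`,
`det (X - M) = det (X • W - W * M) = det (X • W - W + A)`, which is `det B(X)` entry by entry.
-/

open Polynomial

namespace Matrix

variable {R ι : Type*} [CommRing R]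

section

variable [Fintype ι] [DecidableEq ι]

theorem charpoly_eq_det_smul_sub_of_det_eq_one {W N : Matrix ι ι R} (hW : W.det = 1) :
    N.charpoly = ((X : R[X]) • W.map C - (W * N).map C).det := by
  have hWC : (W.map C).det = 1 := by
    rw [← RingHom.mapMatrix_apply, ← RingHom.map_det, hW, map_one]
  have hmul : W.map C * N.charmatrix = (X : R[X]) • W.map C - (W * N).map C := by
    rw [charmatrix, RingHom.mapMatrix_apply, mul_sub, Matrix.map_mul, scalar_apply,
      ← smul_one_eq_diagonal, Matrix.mul_smul, mul_one]
  rw [charpoly, ← one_mul N.charmatrix.det, ← hWC, ← det_mul, hmul]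

end

section

variable [DecidableEq ι]

def pseudoReflection (A : Matrix ι ι R) (i : ι) : Matrix ι ι R :=
  1 - vecMulVec (Pi.single i 1) (A i)

variable [Fintype ι]

theorem vecMul_pseudoReflection (A : Matrix ι ι R) (i : ι) (v : ι → R) :
    v ᵥ* pseudoReflection A i = v - v i • A i := by
  simp [pseudoReflection, vecMul_sub, vecMul_vecMulVec]

theorem vecMul_list_prod_pseudoReflection_of_forall_eq_zero (A : Matrix ι ι R) {v : ι → R}
    {l : List ι} (hv : ∀ k ∈ l, v k = 0) : v ᵥ* (l.map (pseudoReflection A)).prod = v := by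
  induction l with
  | nil => simp
  | cons k l ih =>
    rw [List.map_cons, List.prod_cons, ← vecMul_vecMul, vecMul_pseudoReflection,
      hv k List.mem_cons_self, zero_smul, sub_zero]
    exact ih fun k hk => hv k (List.mem_cons_of_mem _ hk)

end

section

variable [LinearOrder ι]

def unitUpperPart (A : Matrix ι ι R) : Matrix ι ι R :=
  1 + of fun i j => if i < j then A i j else 0

theorem unitUpperPart_apply (A : Matrix ι ι R) (i j : ι) :
    unitUpperPart A i j = if i = j then 1 else if i < j then A i j else 0 := by
  rcases lt_trichotomy i j with h | rfl | h
  · simp [unitUpperPart, h, h.ne]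
  · simp [unitUpperPart]
  · simp [unitUpperPart, h.ne', h.not_gt]

variable [Fintype ι]

theorem det_unitUpperPart (A : Matrix ι ι R) : (unitUpperPart A).det = 1 := by
  rw [det_of_isUpperTriangular]
  · simp [unitUpperPart_apply]
  · intro i j (hji : j < i)
    simp [unitUpperPart_apply, hji.ne', hji.not_gt]

theorem unitUpperPart_vecMul_list_prod_pseudoReflection (A : Matrix ι ι R) {i : ι}
    {l : List ι} (hl : l.Pairwise (· < ·)) (hi : i ∈ l) :
    unitUpperPart A i ᵥ* (l.map (pseudoReflection A)).prod = unitUpperPart A i - A i := by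
  obtain ⟨l₁, l₂, rfl⟩ := List.append_of_mem hi
  have hl₁ : ∀ k ∈ l₁, k < i := fun k hk =>
    (List.pairwise_append.mp hl).2.2 k hk i List.mem_cons_self
  have hl₂ : ∀ k ∈ l₂, i < k := (List.pairwise_cons.mp (List.pairwise_append.mp hl).2.1).1
  have hv₁ : ∀ k ∈ l₁, unitUpperPart A i k = 0 := fun k hk => by
    simp [unitUpperPart_apply, (hl₁ k hk).ne', (hl₁ k hk).not_gt]
  have hv₂ : ∀ k ∈ l₂, (unitUpperPart A i - A i) k = 0 := fun k hk => by
    simp [unitUpperPart_apply, (hl₂ k hk).ne, hl₂ k hk]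
  have hii : unitUpperPart A i i = 1 := by simp [unitUpperPart_apply]
  rw [List.map_append, List.map_cons, List.prod_append, List.prod_cons, ← vecMul_vecMul,
    vecMul_list_prod_pseudoReflection_of_forall_eq_zero A hv₁, ← vecMul_vecMul,
    vecMul_pseudoReflection, hii, one_smul]
  exact vecMul_list_prod_pseudoReflection_of_forall_eq_zero A hv₂

end

theorem unitUpperPart_mul_prod_pseudoReflection_finRange {n : ℕ} (A : Matrix (Fin n) (Fin n) R) :
    unitUpperPart A * ((List.finRange n).map (pseudoReflection A)).prod = unitUpperPart A - A :=
  funext fun i => unitUpperPart_vecMul_list_prod_pseudoReflection A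
    (List.pairwise_lt_finRange n) (List.mem_finRange i)

end Matrix

theorem charpoly_prod_pseudoReflections_general
    (R : Type*) [CommRing R] (n : ℕ)
    (A : Matrix (Fin n) (Fin n) R)
    (s : Fin n → Module.End R (Fin n → R))
    (hs : ∀ i j : Fin n, s i (Pi.single j 1) = (Pi.single j 1 : Fin n → R) - A i j • (Pi.single i 1 : Fin n → R)) :
    LinearMap.charpoly (((List.finRange n).map s).prod) =
      Matrix.det (Matrix.of fun i j : Fin n =>
        if i < j then X * C (A i j)
        else if i = j then X - 1 + C (A i j)
        else C (A i j)) := by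
  have hs_matrix (i : Fin n) : LinearMap.toMatrix' (s i) = A.pseudoReflection i := by
    ext k j
    simp [LinearMap.toMatrix'_apply, hs, Matrix.pseudoReflection, Matrix.vecMulVec_apply,
      Pi.single_apply, Matrix.one_apply]
  have hc_matrix : LinearMap.toMatrix' ((List.finRange n).map s).prod =
      ((List.finRange n).map A.pseudoReflection).prod := by
    refine (map_list_prod LinearMap.toMatrixAlgEquiv' _).trans ?_
    rw [List.map_map]
    exact congrArg _ (List.map_congr_left fun i _ => hs_matrix i)
  rw [← LinearMap.charpoly_toMatrix _ (Pi.basisFun R (Fin n)), LinearMap.toMatrix_eq_toMatrix',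
    hc_matrix, Matrix.charpoly_eq_det_smul_sub_of_det_eq_one (Matrix.det_unitUpperPart A),
    Matrix.unitUpperPart_mul_prod_pseudoReflection_finRange]
  congr 1
  ext i j
  rcases lt_trichotomy i j with h | rfl | h
  · simp [Matrix.unitUpperPart_apply, h, h.ne]
  · simp [Matrix.unitUpperPart_apply]
    ring
  · simp [Matrix.unitUpperPart_apply, h.ne', h.not_gt]

/-- Bourbaki, Groupes et algèbres de Lie, Ch. V, § 6, Exercice 3:
the characteristic polynomial of a product `c = s_1 ∘ ⋯ ∘ s_n` of pseudo-reflections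
`s_i(e_j) = e_j − a_{ij} e_i` equals `det B(t)` with `B(t)_{ij} = t·a_{ij}` for `i < j`,
`B(t)_{ii} = t − 1 + a_{ii}` and `B(t)_{ij} = a_{ij}` for `i > j`. -/
theorem charpoly_prod_pseudoReflections
    (R : Type*) [CommRing R] (n : ℕ) (hn : 1 ≤ n)
    (A : Matrix (Fin n) (Fin n) R)
    (s : Fin n → Module.End R (Fin n → R))
    (hs : ∀ i j : Fin n, s i (Pi.single j 1) = (Pi.single j 1 : Fin n → R) - A i j • (Pi.single i 1 : Fin n → R)) :
    LinearMap.charpoly (((List.finRange n).map s).prod) =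
      Matrix.det (Matrix.of fun i j : Fin n =>
        if i < j then X * C (A i j)
        else if i = j then X - 1 + C (A i j)
        else C (A i j)) :=
  charpoly_prod_pseudoReflections_general R n A s hs
end
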